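/- Let p be a positive natural number, E := EuclideanSpace ℝ (Fin p), and let (Ω, 𝒜, μ) be a probability space with a filtration (ℱ_k)_{k∈ℕ}. Let L, σ, c, b, b₀, B₃ > 0, and set b̃ := b₀·c² + b·B₃/c. Let f : E → ℝ be differentiable with L-Lipschitz gradient and bounded below by f* ∈ ℝ. Fix K ≥ 1 and 0 < α ≤ 1/(4·L), and set α_k := α/√K for every k. Suppose random sequences θ_k, r_k, b_k : Ω → E satisfy: θ_0 deterministic; θ_{k+1} = θ_k − α_k • (∇f(θ_k) + r_k + b_k); θ_k and b_k are ℱ_k-measurable; r_k is ℱ_{k+1}-measurable, integrable with square-integrable norm; E[r_k | ℱ_k] = 0 a.s.; E[‖r_k‖² | ℱ_k] ≤ σ²·B₃²/c² a.s.; ‖b_k‖ ≤ b̃ a.s.; and each θ_k has square-integrable norm with f(θ_k) integrable. Then min_{0 ≤ k < K} E[‖∇f(θ_k)‖²] ≤ 4·(f(θ_0) − f*)/(α·√K) + 2·L·α·(σ²·B₃²/c² + 2·b̃²)/√K + 2·b̃². -/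

import Mathlib

/-!
The descent lemma for the `L`-smooth `f`, together with Young's inequality for the bias, turns
one step of the recursion with stepsize `η = α/√K` (so that `Lη ≤ 1/4`) into
`f(θ_{k+1}) ≤ f(θ_k) - (η/2)‖∇f(θ_k)‖² + ⟪Y_k, r_k⟫ + (Lη²/2)‖r_k‖² + (η + Lη²)b̃²`
with `Y_k` an `ℱ_k`-measurable vector. The cross term has zero expectation because
`E[r_k | ℱ_k] = 0`, and `E‖r_k‖² ≤ σ²B₃²/c²`. Telescoping the expected inequality over
`k < K` bounds the average, hence the minimum, of `E‖∇f(θ_k)‖²` by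
`2(f(θ_0) - f*)/(α√K) + Lα(σ²B₃²/c² + 2b̃²)/√K + 2b̃²`.
-/

open MeasureTheory
open scoped RealInnerProductSpace NNReal ENNReal

section Descent

variable {E : Type*} [NormedAddCommGroup E] [InnerProductSpace ℝ E] [CompleteSpace E]
  {f : E → ℝ} {K : ℝ≥0}

theorem le_add_inner_gradient_add_sq_of_lipschitzWith (hf : Differentiable ℝ f)
    (hg : LipschitzWith K (gradient f)) (x y : E) :
    f y ≤ f x + ⟪gradient f x, y - x⟫ + K / 2 * ‖y - x‖ ^ 2 := by
  set v := y - x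
  have hderiv (t : ℝ) :
      HasDerivAt (fun t : ℝ => f (x + t • v)) ⟪gradient f (x + t • v), v⟫ t := by
    have hline : HasDerivAt (fun t : ℝ => x + t • v) v t := by
      simpa using ((hasDerivAt_id t).smul_const v).const_add x
    exact (hf _).hasGradientAt.hasFDerivAt.comp_hasDerivAt t hline
  have hbound (t : ℝ) :
      HasDerivAt (fun t : ℝ => f x + t * ⟪gradient f x, v⟫ + K / 2 * t ^ 2 * ‖v‖ ^ 2)
        (⟪gradient f x, v⟫ + K * t * ‖v‖ ^ 2) t := by
    refine ((((hasDerivAt_id t).mul_const ⟪gradient f x, v⟫).const_add (f x)).add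
      (((hasDerivAt_pow 2 t).const_mul (K / 2 : ℝ)).mul_const (‖v‖ ^ 2))).congr_deriv ?_
    ring
  have hfence := image_le_of_deriv_right_le_deriv_boundary (a := 0) (b := 1)
    (fun t _ => (hderiv t).continuousAt.continuousWithinAt)
    (fun t _ => (hderiv t).hasDerivWithinAt) (by simp)
    (fun t _ => (hbound t).continuousAt.continuousWithinAt)
    (fun t _ => (hbound t).hasDerivWithinAt) (fun t ht => ?_) (Set.right_mem_Icc.2 zero_le_one)
  · simpa [v] using hfence
  calc ⟪gradient f (x + t • v), v⟫
      = ⟪gradient f x, v⟫ + ⟪gradient f (x + t • v) - gradient f x, v⟫ := by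
        rw [inner_sub_left]; ring
    _ ≤ ⟪gradient f x, v⟫ + ‖gradient f (x + t • v) - gradient f x‖ * ‖v‖ := by
        gcongr; exact real_inner_le_norm _ _
    _ ≤ ⟪gradient f x, v⟫ + K * ‖t • v‖ * ‖v‖ := by
        gcongr; simpa using hg.norm_sub_le (x + t • v) x
    _ = ⟪gradient f x, v⟫ + K * t * ‖v‖ ^ 2 := by
        rw [norm_smul, Real.norm_of_nonneg ht.1]; ring

theorem image_sub_smul_biased_gradient_le (hf : Differentiable ℝ f)
    (hg : LipschitzWith K (gradient f)) {η β : ℝ} (hη : 0 ≤ η) (hKη : K * η ≤ 1 / 4)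
    (x r b : E) (hb : ‖b‖ ≤ β) :
    f (x - η • (gradient f x + r + b)) ≤ f x - η / 2 * ‖gradient f x‖ ^ 2
      + ⟪(K * η ^ 2) • (gradient f x + b) - η • gradient f x, r⟫
      + K * η ^ 2 / 2 * ‖r‖ ^ 2 + (η + K * η ^ 2) * β ^ 2 := by
  have hdesc := le_add_inner_gradient_add_sq_of_lipschitzWith hf hg x
    (x - η • (gradient f x + r + b))
  set g := gradient f x
  rw [sub_sub_cancel_left, inner_neg_right, norm_neg, real_inner_smul_right, norm_smul,
    Real.norm_of_nonneg hη, mul_pow] at hdesc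
  have hinner : ⟪g, g + r + b⟫ = ‖g‖ ^ 2 + ⟪g, r⟫ + ⟪g, b⟫ := by
    rw [inner_add_right, inner_add_right, real_inner_self_eq_norm_sq]
  have hnorm : ‖g + r + b‖ ^ 2 = ‖g + b‖ ^ 2 + 2 * ⟪g + b, r⟫ + ‖r‖ ^ 2 := by
    rw [add_right_comm, norm_add_sq_real]
  rw [hinner, hnorm] at hdesc
  rw [inner_sub_left, real_inner_smul_left, real_inner_smul_left]
  have hgb : -⟪g, b⟫ ≤ ‖g‖ * β :=
    (neg_le_abs _).trans ((abs_real_inner_le_norm g b).trans (by gcongr))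
  have hyoung : -⟪g, b⟫ ≤ ‖g‖ ^ 2 / 4 + β ^ 2 := by
    nlinarith [sq_nonneg (‖g‖ / 2 - β)]
  have hpar : ‖g + b‖ ^ 2 ≤ 2 * ‖g‖ ^ 2 + 2 * β ^ 2 := by
    nlinarith [norm_add_sq_real g b, norm_sub_sq_real g b, sq_nonneg ‖g - b‖,
      pow_le_pow_left₀ (norm_nonneg b) hb 2]
  linarith [mul_le_mul_of_nonneg_left hyoung hη,
    mul_le_mul_of_nonneg_left hpar (by positivity : (0 : ℝ) ≤ K * η ^ 2 / 2),
    mul_le_mul_of_nonneg_right hKη (by positivity : (0 : ℝ) ≤ η * ‖g‖ ^ 2)]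

end Descent

theorem LipschitzWith.comp_memLp_of_isFiniteMeasure {Ω F G : Type*} {mΩ : MeasurableSpace Ω}
    {μ : Measure Ω} [IsFiniteMeasure μ] [NormedAddCommGroup F] [NormedAddCommGroup G]
    {p : ℝ≥0∞} {K : ℝ≥0} {g : F → G} (hg : LipschitzWith K g) {X : Ω → F}
    (hX : MemLp X p μ) : MemLp (g ∘ X) p μ := by
  convert ((hg.sub (LipschitzWith.const (g 0))).comp_memLp (by simp) hX).add
    (memLp_const (g 0)) using 1
  ext
  exact (sub_add_cancel _ _).symm

theorem exists_lt_le_of_le_sub_mul_add {a G : ℕ → ℝ} {c d m : ℝ} {n : ℕ} (hn : 0 < n)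
    (hc : 0 < c) (hstep : ∀ k < n, a (k + 1) ≤ a k - c * G k + d) (hlow : m ≤ a n) :
    ∃ k < n, G k ≤ (a 0 - m) / (c * n) + d / c := by
  have hsum : ∑ k ∈ Finset.range n, (c * G k - d) ≤ ∑ k ∈ Finset.range n, (a k - a (k + 1)) :=
    Finset.sum_le_sum fun k hk => by linarith [hstep k (Finset.mem_range.1 hk)]
  rw [Finset.sum_range_sub', Finset.sum_sub_distrib, ← Finset.mul_sum, Finset.sum_const,
    Finset.card_range, nsmul_eq_mul] at hsum
  obtain ⟨k, hk, hle⟩ := Finset.exists_le_of_sum_le (Finset.nonempty_range_iff.2 hn.ne')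
    (f := G) (g := fun _ => (a 0 - m) / (c * n) + d / c) (by
      rw [Finset.sum_const, Finset.card_range, nsmul_eq_mul]
      have hn' : (0 : ℝ) < n := by exact_mod_cast hn
      field_simp
      linarith)
  exact ⟨k, Finset.mem_range.1 hk, hle⟩

section Probability

variable {E : Type*} [NormedAddCommGroup E] [InnerProductSpace ℝ E]
  {Ω : Type*} {m mΩ : MeasurableSpace Ω} {μ : Measure Ω}

theorem MemLp.integrable_inner {X Y : Ω → E} (hX : MemLp X 2 μ) (hY : MemLp Y 2 μ) :
    Integrable (fun ω => ⟪X ω, Y ω⟫) μ :=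
  (hX.norm.integrable_mul hY.norm).mono' (hX.1.inner hY.1)
    (ae_of_all _ fun _ => norm_inner_le_norm _ _)

theorem integral_inner_eq_zero_of_condExp_eq_zero [CompleteSpace E] (hm : m ≤ mΩ)
    [SigmaFinite (μ.trim hm)] {X Y : Ω → E} (hX : StronglyMeasurable[m] X)
    (hXY : Integrable (fun ω => ⟪X ω, Y ω⟫) μ) (hY : Integrable Y μ) (hYm : μ[Y|m] =ᵐ[μ] 0) :
    ∫ ω, ⟪X ω, Y ω⟫ ∂μ = 0 := by
  have hpull : μ[fun ω => ⟪X ω, Y ω⟫|m] =ᵐ[μ] fun ω => ⟪X ω, μ[Y|m] ω⟫ :=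
    condExp_bilin_of_stronglyMeasurable_left (innerSL ℝ) hX hXY hY
  rw [← integral_condExp hm, integral_congr_ae hpull]
  refine integral_eq_zero_of_ae ?_
  filter_upwards [hYm] with ω hω
  simp [hω]

theorem integral_le_of_ae_condExp_le [IsProbabilityMeasure μ] (hm : m ≤ mΩ) {Y : Ω → ℝ}
    {C : ℝ} (hY : ∀ᵐ ω ∂μ, μ[Y|m] ω ≤ C) : ∫ ω, Y ω ∂μ ≤ C := by
  rw [← integral_condExp hm]
  simpa using integral_mono_ae integrable_condExp (integrable_const C) hY

theorem integral_sub_smul_biased_gradient_le [CompleteSpace E] [IsProbabilityMeasure μ]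
    (hm : m ≤ mΩ) {f : E → ℝ} {K : ℝ≥0} (hf : Differentiable ℝ f)
    (hg : LipschitzWith K (gradient f)) {η β V : ℝ} (hη : 0 ≤ η) (hKη : K * η ≤ 1 / 4)
    {X R B : Ω → E} (hX : StronglyMeasurable[m] X) (hX2 : MemLp X 2 μ)
    (hB : StronglyMeasurable[m] B) (hBβ : ∀ᵐ ω ∂μ, ‖B ω‖ ≤ β)
    (hR : MemLp R 2 μ) (hRm : μ[R|m] =ᵐ[μ] 0) (hRV : ∫ ω, ‖R ω‖ ^ 2 ∂μ ≤ V)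
    (hfX : Integrable (fun ω => f (X ω)) μ)
    (hfX' : Integrable (fun ω => f (X ω - η • (gradient f (X ω) + R ω + B ω))) μ) :
    ∫ ω, f (X ω - η • (gradient f (X ω) + R ω + B ω)) ∂μ
      ≤ ∫ ω, f (X ω) ∂μ - η / 2 * ∫ ω, ‖gradient f (X ω)‖ ^ 2 ∂μ
        + (K * η ^ 2 / 2 * V + (η + K * η ^ 2) * β ^ 2) := by
  set G := fun ω => gradient f (X ω)
  set Y := fun ω => (K * η ^ 2 : ℝ) • (G ω + B ω) - η • G ω
  have hG : StronglyMeasurable[m] G := hg.continuous.comp_stronglyMeasurable hX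
  have hG2 : MemLp G 2 μ := hg.comp_memLp_of_isFiniteMeasure hX2
  have hB2 : MemLp B 2 μ := MemLp.of_bound (hB.mono hm).aestronglyMeasurable β hBβ
  have hY : StronglyMeasurable[m] Y := ((hG.add hB).const_smul _).sub (hG.const_smul _)
  have hYR : Integrable (fun ω => ⟪Y ω, R ω⟫) μ :=
    MemLp.integrable_inner (((hG2.add hB2).const_smul _).sub (hG2.const_smul _)) hR
  have hYR0 : ∫ ω, ⟪Y ω, R ω⟫ ∂μ = 0 :=
    integral_inner_eq_zero_of_condExp_eq_zero hm hY hYR (hR.integrable one_le_two) hRm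
  have hG2' : Integrable (fun ω => ‖G ω‖ ^ 2) μ := hG2.integrable_norm_pow two_ne_zero
  have hR2' : Integrable (fun ω => ‖R ω‖ ^ 2) μ := hR.integrable_norm_pow two_ne_zero
  have hpt : ∀ᵐ ω ∂μ, f (X ω - η • (G ω + R ω + B ω)) ≤ f (X ω) - η / 2 * ‖G ω‖ ^ 2
      + ⟪Y ω, R ω⟫ + K * η ^ 2 / 2 * ‖R ω‖ ^ 2 + (η + K * η ^ 2) * β ^ 2 := by
    filter_upwards [hBβ] with ω hω
    exact image_sub_smul_biased_gradient_le hf hg hη hKη _ _ _ hω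
  have h₁ : Integrable (fun ω => f (X ω) - η / 2 * ‖G ω‖ ^ 2) μ := hfX.sub (hG2'.const_mul _)
  have h₂ : Integrable (fun ω => f (X ω) - η / 2 * ‖G ω‖ ^ 2 + ⟪Y ω, R ω⟫) μ := h₁.add hYR
  have h₃ : Integrable (fun ω => f (X ω) - η / 2 * ‖G ω‖ ^ 2 + ⟪Y ω, R ω⟫
      + K * η ^ 2 / 2 * ‖R ω‖ ^ 2) μ := h₂.add (hR2'.const_mul _)
  calc ∫ ω, f (X ω - η • (G ω + R ω + B ω)) ∂μ
      ≤ ∫ ω, (f (X ω) - η / 2 * ‖G ω‖ ^ 2 + ⟪Y ω, R ω⟫ + K * η ^ 2 / 2 * ‖R ω‖ ^ 2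
          + (η + K * η ^ 2) * β ^ 2) ∂μ :=
        integral_mono_ae hfX' (h₃.add (integrable_const _)) hpt
    _ = ∫ ω, f (X ω) ∂μ - η / 2 * ∫ ω, ‖G ω‖ ^ 2 ∂μ + K * η ^ 2 / 2 * ∫ ω, ‖R ω‖ ^ 2 ∂μ
          + (η + K * η ^ 2) * β ^ 2 := by
        rw [integral_add h₃ (integrable_const _), integral_add h₂ (hR2'.const_mul _),
          integral_add h₁ hYR, integral_sub hfX (hG2'.const_mul _), integral_const_mul,
          integral_const_mul, integral_const, hYR0]
        simp
    _ ≤ _ := by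
        have : K * η ^ 2 / 2 * ∫ ω, ‖R ω‖ ^ 2 ∂μ ≤ K * η ^ 2 / 2 * V := by gcongr
        linarith

theorem biased_sgd_exists_lt_integral_norm_gradient_sq_le [CompleteSpace E]
    [IsProbabilityMeasure μ] (ℱ : Filtration ℕ mΩ) {f : E → ℝ} {L : ℝ≥0} {fstar : ℝ}
    (hf : Differentiable ℝ f) (hg : LipschitzWith L (gradient f)) (hflb : ∀ x, fstar ≤ f x)
    {η β V : ℝ} (hη : 0 < η) (hLη : L * η ≤ 1 / 4) {θ r b : ℕ → Ω → E}
    (hrec : ∀ k ω, θ (k + 1) ω = θ k ω - η • (gradient f (θ k ω) + r k ω + b k ω))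
    (hθ : ∀ k, StronglyMeasurable[ℱ k] (θ k)) (hθ2 : ∀ k, MemLp (θ k) 2 μ)
    (hb : ∀ k, StronglyMeasurable[ℱ k] (b k)) (hbβ : ∀ k, ∀ᵐ ω ∂μ, ‖b k ω‖ ≤ β)
    (hr : ∀ k, MemLp (r k) 2 μ) (hrm : ∀ k, μ[r k|ℱ k] =ᵐ[μ] 0)
    (hrV : ∀ k, ∀ᵐ ω ∂μ, μ[fun ω' => ‖r k ω'‖ ^ 2|ℱ k] ω ≤ V)
    (hfθ : ∀ k, Integrable (fun ω => f (θ k ω)) μ) {n : ℕ} (hn : 0 < n) :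
    ∃ k < n, ∫ ω, ‖gradient f (θ k ω)‖ ^ 2 ∂μ
      ≤ 2 * (∫ ω, f (θ 0 ω) ∂μ - fstar) / (η * n) + L * η * V + 2 * (1 + L * η) * β ^ 2 := by
  have hstep (k : ℕ) : ∫ ω, f (θ (k + 1) ω) ∂μ ≤ ∫ ω, f (θ k ω) ∂μ
      - η / 2 * ∫ ω, ‖gradient f (θ k ω)‖ ^ 2 ∂μ
        + (L * η ^ 2 / 2 * V + (η + L * η ^ 2) * β ^ 2) := by
    have hfθ' := hfθ (k + 1)
    simp only [hrec] at hfθ' ⊢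
    exact integral_sub_smul_biased_gradient_le (ℱ.le k) hf hg hη.le hLη (hθ k) (hθ2 k) (hb k)
      (hbβ k) (hr k) (hrm k) (integral_le_of_ae_condExp_le (ℱ.le k) (hrV k)) (hfθ k) hfθ'
  have hlow : fstar ≤ ∫ ω, f (θ n ω) ∂μ := by
    simpa using integral_mono (integrable_const fstar) (hfθ n) fun ω => hflb _
  obtain ⟨k, hk, hle⟩ := exists_lt_le_of_le_sub_mul_add (a := fun k => ∫ ω, f (θ k ω) ∂μ) hn
    (half_pos hη) (fun k _ => hstep k) hlow
  refine ⟨k, hk, hle.trans_eq ?_⟩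
  field_simp
  ring

end Probability

theorem biased_spsa_fixed_budget_general
    (p : ℕ)
    {Ω : Type*} {mΩ : MeasurableSpace Ω} {μ : Measure Ω} [IsProbabilityMeasure μ]
    (ℱ : Filtration ℕ mΩ)
    (L σ c b b₀ B₃ : ℝ)
    (f : EuclideanSpace ℝ (Fin p) → ℝ) (fstar : ℝ)
    (hf : Differentiable ℝ f)
    (hLip : ∀ x y, ‖gradient f x - gradient f y‖ ≤ L * ‖x - y‖)
    (hflb : ∀ x, fstar ≤ f x)
    (K : ℕ) (hK : 1 ≤ K)
    (α : ℝ) (hα : 0 < α) (hαL : α ≤ 1 / (4 * L))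
    (θ r bk : ℕ → Ω → EuclideanSpace ℝ (Fin p))
    (θ0 : EuclideanSpace ℝ (Fin p)) (hθ0 : ∀ ω, θ 0 ω = θ0)
    (hrec : ∀ k ω, θ (k + 1) ω = θ k ω
      - (α / Real.sqrt K) • (gradient f (θ k ω) + r k ω + bk k ω))
    (hθmeas : ∀ k, StronglyMeasurable[ℱ k] (θ k))
    (hbmeas : ∀ k, StronglyMeasurable[ℱ k] (bk k))
    (hrint : ∀ k, Integrable (r k) μ)
    (hrsq : ∀ k, Integrable (fun ω => ‖r k ω‖ ^ 2) μ)
    (hrcond : ∀ k, μ[r k|ℱ k] =ᵐ[μ] 0)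
    (hrvar : ∀ k, ∀ᵐ ω ∂μ,
      (μ[fun ω' => ‖r k ω'‖ ^ 2|ℱ k]) ω ≤ σ ^ 2 * B₃ ^ 2 / c ^ 2)
    (hbbd : ∀ k, ∀ᵐ ω ∂μ, ‖bk k ω‖ ≤ b₀ * c ^ 2 + b * B₃ / c)
    (hθsq : ∀ k, Integrable (fun ω => ‖θ k ω‖ ^ 2) μ)
    (hfint : ∀ k, Integrable (fun ω => f (θ k ω)) μ) :
    ∃ k < K, ∫ ω, ‖gradient f (θ k ω)‖ ^ 2 ∂μ
      ≤ 4 * (f θ0 - fstar) / (α * Real.sqrt K)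
        + 2 * L * α * (σ ^ 2 * B₃ ^ 2 / c ^ 2
            + 2 * (b₀ * c ^ 2 + b * B₃ / c) ^ 2) / Real.sqrt K
        + 2 * (b₀ * c ^ 2 + b * B₃ / c) ^ 2 := by
  have hL : 0 < L := by linarith [one_div_pos.1 (hα.trans_le hαL)]
  have hs1 : 1 ≤ Real.sqrt K := Real.one_le_sqrt.2 (by exact_mod_cast hK)
  have hη : 0 < α / Real.sqrt K := div_pos hα (by linarith)
  have hLη : L * (α / Real.sqrt K) ≤ 1 / 4 := calc
    L * (α / Real.sqrt K) ≤ L * α := by gcongr; exact div_le_self hα.le hs1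
    _ ≤ 1 / 4 := by rw [le_div_iff₀ (by positivity)] at hαL; linarith
  lift L to ℝ≥0 using hL.le
  have hgrad : LipschitzWith L (gradient f) :=
    LipschitzWith.of_dist_le_mul fun x y => by simpa only [dist_eq_norm] using hLip x y
  obtain ⟨k, hk, hle⟩ := biased_sgd_exists_lt_integral_norm_gradient_sq_le ℱ hf hgrad hflb hη
    hLη hrec hθmeas
    (fun k => (memLp_two_iff_integrable_sq_norm
      ((hθmeas k).mono (ℱ.le k)).aestronglyMeasurable).2 (hθsq k))
    hbmeas hbbd (fun k => (memLp_two_iff_integrable_sq_norm (hrint k).1).2 (hrsq k)) hrcond hrvar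
    hfint hK
  refine ⟨k, hk, hle.trans ?_⟩
  set V := σ ^ 2 * B₃ ^ 2 / c ^ 2
  set β := b₀ * c ^ 2 + b * B₃ / c
  set s := Real.sqrt K
  have hK' : (K : ℝ) = s ^ 2 := (Real.sq_sqrt (Nat.cast_nonneg K)).symm
  have hD : 0 ≤ (f θ0 - fstar) / (α * s) := div_nonneg (sub_nonneg.2 (hflb θ0)) (by positivity)
  have hM : 0 ≤ L * α * (V + 2 * β ^ 2) / s := by positivity
  calc _ = 2 * ((f θ0 - fstar) / (α * s)) + L * α * (V + 2 * β ^ 2) / s + 2 * β ^ 2 := by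
        simp only [hθ0, integral_const, probReal_univ, one_smul]
        rw [hK']
        field_simp
        ring
    _ ≤ 4 * ((f θ0 - fstar) / (α * s)) + 2 * (L * α * (V + 2 * β ^ 2) / s) + 2 * β ^ 2 := by
        linarith
    _ = _ := by ring

/-- fixed-budget convergence guarantee for SPSA with biased function
evaluations. The gradient estimate decomposes as `∇f(θ_k) + r_k + b_k`, with
conditional second moment of `r_k` at most `σ²B₃²/c²` and `‖b_k‖ ≤ b̃ = b₀c² + bB₃/c`
a.s.; with constant stepsize `α/√K`, `0 < α ≤ 1/(4L)`,
`min_{k<K} E‖∇f(θ_k)‖² ≤ 4(f(θ_0) − f*)/(α√K) + 2Lα(σ²B₃²/c² + 2b̃²)/√K + 2b̃²`. -/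
theorem biased_spsa_fixed_budget
    (p : ℕ) (hp : 0 < p)
    {Ω : Type*} {mΩ : MeasurableSpace Ω} {μ : Measure Ω} [IsProbabilityMeasure μ]
    (ℱ : Filtration ℕ mΩ)
    (L σ c b b₀ B₃ : ℝ) (hL : 0 < L) (hσ : 0 < σ) (hc : 0 < c) (hb : 0 < b)
    (hb₀ : 0 < b₀) (hB₃ : 0 < B₃)
    (f : EuclideanSpace ℝ (Fin p) → ℝ) (fstar : ℝ)
    (hf : Differentiable ℝ f)
    (hLip : ∀ x y, ‖gradient f x - gradient f y‖ ≤ L * ‖x - y‖)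
    (hflb : ∀ x, fstar ≤ f x)
    (K : ℕ) (hK : 1 ≤ K)
    (α : ℝ) (hα : 0 < α) (hαL : α ≤ 1 / (4 * L))
    (θ r bk : ℕ → Ω → EuclideanSpace ℝ (Fin p))
    (θ0 : EuclideanSpace ℝ (Fin p)) (hθ0 : ∀ ω, θ 0 ω = θ0)
    (hrec : ∀ k ω, θ (k + 1) ω = θ k ω
      - (α / Real.sqrt K) • (gradient f (θ k ω) + r k ω + bk k ω))
    (hθmeas : ∀ k, StronglyMeasurable[ℱ k] (θ k))
    (hbmeas : ∀ k, StronglyMeasurable[ℱ k] (bk k))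
    (hrmeas : ∀ k, StronglyMeasurable[ℱ (k + 1)] (r k))
    (hrint : ∀ k, Integrable (r k) μ)
    (hrsq : ∀ k, Integrable (fun ω => ‖r k ω‖ ^ 2) μ)
    (hrcond : ∀ k, μ[r k|ℱ k] =ᵐ[μ] 0)
    (hrvar : ∀ k, ∀ᵐ ω ∂μ,
      (μ[fun ω' => ‖r k ω'‖ ^ 2|ℱ k]) ω ≤ σ ^ 2 * B₃ ^ 2 / c ^ 2)
    (hbbd : ∀ k, ∀ᵐ ω ∂μ, ‖bk k ω‖ ≤ b₀ * c ^ 2 + b * B₃ / c)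
    (hθsq : ∀ k, Integrable (fun ω => ‖θ k ω‖ ^ 2) μ)
    (hfint : ∀ k, Integrable (fun ω => f (θ k ω)) μ) :
    ∃ k < K, ∫ ω, ‖gradient f (θ k ω)‖ ^ 2 ∂μ
      ≤ 4 * (f θ0 - fstar) / (α * Real.sqrt K)
        + 2 * L * α * (σ ^ 2 * B₃ ^ 2 / c ^ 2
            + 2 * (b₀ * c ^ 2 + b * B₃ / c) ^ 2) / Real.sqrt K
        + 2 * (b₀ * c ^ 2 + b * B₃ / c) ^ 2 :=
  biased_spsa_fixed_budget_general p ℱ L σ c b b₀ B₃ f fstar hf hLip hflb K hK α hα hαL θ r bk θ0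
    hθ0 hrec hθmeas hbmeas hrint hrsq hrcond hrvar hbbd hθsq hfint
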